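/- arXiv:2002.06580 — 2 statements merged into one kernel-verified Lean document; each statement's English description precedes it below -/
import Mathlib

section
/- There exists a unique p̂ ∈ (0, 1/2) satisfying (1−2p̂)³/(2p̂(1−p̂)) = ln((1−p̂)/p̂), and moreover 0.124 < p̂ < 0.1242. -/
/-!
With `t = 1 - 2p`, the derivative of `g = thresholdGap` has the sign of `t⁴ - 4t² + 1`, so `g` decreases on
`(0, p₀]` and increases on `[p₀, 1/2]`, where `t(p₀)² = 2 - √3` (`p₀ ≈ 0.2412`). Since
`g (1/2) = 0`, `g` is negative on `[p₀, 1/2)`, and on `(0, p₀]` it is injective; a sign change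
between `0.124` and `0.1242`, checked with `e² ≈ 7.389` and `exp x ≥ 1 + x`, gives the root.
-/

open Real Set

noncomputable def thresholdGap (p : ℝ) : ℝ :=
  (1 - 2*p)^3 / (2*p*(1-p)) - log ((1-p)/p)

theorem hasDerivAt_thresholdGap {p : ℝ} (hp0 : 0 < p) (hp1 : p < 1) :
    HasDerivAt thresholdGap (((1-2*p)^4 - 4*(1-2*p)^2 + 1) / (4*p^2*(1-p)^2)) p := by
  have hq : 0 < 1 - p := sub_pos.mpr hp1
  have hx := hasDerivAt_id' p
  have hnum := ((hx.const_mul 2).const_sub 1).fun_pow 3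
  have hden := (hx.const_mul 2).fun_mul (hx.const_sub 1)
  have hratio := (hx.const_sub 1).fun_div hx hp0.ne'
  have hD : 2 * p * (1 - p) ≠ 0 := by positivity
  have hR : (1 - p) / p ≠ 0 := by positivity
  refine ((hnum.fun_div hden hD).fun_sub (hratio.log hR) :
    HasDerivAt thresholdGap _ p).congr_deriv ?_
  field_simp
  ring

theorem continuousOn_thresholdGap : ContinuousOn thresholdGap (Ioo 0 1) :=
  fun _ hp => (hasDerivAt_thresholdGap hp.1 hp.2).continuousAt.continuousWithinAt

theorem thresholdGap_half : thresholdGap (1/2) = 0 := by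
  norm_num [thresholdGap]

theorem quartic_eq_mul_sqrt_three (t : ℝ) :
    t^4 - 4*t^2 + 1 = (t^2 - (2 - √3)) * (t^2 - (2 + √3)) := by
  linear_combination sq_sqrt (show (0:ℝ) ≤ 3 by norm_num)

-- Solves `(1 - 2p)² = 2 - √3`, where the derivative of `thresholdGap` vanishes.
noncomputable def thresholdCrit : ℝ := (1 - √(2 - √3)) / 2

theorem thresholdCrit_lt_half : thresholdCrit < 1/2 := by
  have h3 : √3 < 2 := by rw [sqrt_lt' (by norm_num)]; norm_num
  have : 0 < √(2 - √3) := sqrt_pos.mpr (by linarith)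
  unfold thresholdCrit; linarith

theorem one_fifth_lt_thresholdCrit : 1/5 < thresholdCrit := by
  have h3 : (1.64 : ℝ) < √3 := by rw [lt_sqrt (by norm_num)]; norm_num
  have : √(2 - √3) < 3/5 := by rw [sqrt_lt' (by norm_num)]; linarith
  unfold thresholdCrit; linarith

theorem strictAntiOn_thresholdGap : StrictAntiOn thresholdGap (Ioc 0 thresholdCrit) := by
  have hc := thresholdCrit_lt_half
  refine strictAntiOn_of_deriv_neg (convex_Ioc 0 _)
    (continuousOn_thresholdGap.mono fun p hp => ⟨hp.1, by linarith [hp.2]⟩) fun p hp => ?_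
  rw [interior_Ioc] at hp
  obtain ⟨hp0, hpc⟩ := hp
  have hq : 0 < 1 - p := by linarith
  rw [(hasDerivAt_thresholdGap hp0 (by linarith)).deriv, quartic_eq_mul_sqrt_three]
  have ht : √(2 - √3) < 1 - 2*p := by unfold thresholdCrit at hpc; linarith
  have ht2 : 2 - √3 < (1 - 2*p)^2 := (sqrt_lt' (by linarith)).mp ht
  have ht1 : (1 - 2*p)^2 < 1 := by nlinarith
  refine div_neg_of_neg_of_pos (mul_neg_of_pos_of_neg ?_ ?_) (by positivity)
  · linarith
  · linarith [sqrt_nonneg 3]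

theorem strictMonoOn_thresholdGap : StrictMonoOn thresholdGap (Icc thresholdCrit (1/2)) := by
  have hc := one_fifth_lt_thresholdCrit
  refine strictMonoOn_of_deriv_pos (convex_Icc _ _)
    (continuousOn_thresholdGap.mono fun p hp => ⟨by linarith [hp.1], by linarith [hp.2]⟩)
    fun p hp => ?_
  rw [interior_Icc] at hp
  obtain ⟨hpc, hp2⟩ := hp
  rw [(hasDerivAt_thresholdGap (by linarith) (by linarith)).deriv, quartic_eq_mul_sqrt_three]
  have ht : 1 - 2*p < √(2 - √3) := by unfold thresholdCrit at hpc; linarith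
  have ht2 : (1 - 2*p)^2 < 2 - √3 := (lt_sqrt (by linarith)).mp ht
  have hp0 : 0 < p := by linarith
  have hq : 0 < 1 - p := by linarith
  refine div_pos (mul_pos_of_neg_of_neg ?_ ?_) (by positivity)
  · linarith
  · linarith [sqrt_nonneg 3]

theorem thresholdGap_neg_of_thresholdCrit_le {p : ℝ} (hcp : thresholdCrit ≤ p) (hp : p < 1/2) :
    thresholdGap p < 0 :=
  thresholdGap_half ▸ strictMonoOn_thresholdGap ⟨hcp, hp.le⟩ ⟨hcp.trans hp.le, le_rfl⟩ hp

theorem log_lt_of_lt_exp_mul {x t d : ℝ} (hx0 : 0 < x) (hx : x < exp t * (1 - d)) :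
    log x < t - d := by
  rw [log_lt_iff_lt_exp hx0, sub_eq_add_neg, exp_add]
  nlinarith [add_one_le_exp (-d), exp_pos t]

theorem lt_log_of_exp_lt_mul {x t d : ℝ} (hx0 : 0 < x) (hx : exp t < x * (1 + d)) :
    t - d < log x := by
  rw [lt_log_iff_exp_lt hx0]
  have hsplit : exp (t - d) * exp d = exp t := by rw [← exp_add, sub_add_cancel]
  nlinarith [mul_le_mul_of_nonneg_left (add_one_le_exp d) hx0.le, exp_pos d]

theorem exp_two_gt : 7.389 < exp 2 := by
  have h := exp_one_gt_d9
  rw [show (2:ℝ) = 1 + 1 by norm_num, exp_add]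
  nlinarith

theorem exp_two_lt : exp 2 < 7.39 := by
  have h := exp_one_lt_d9
  rw [show (2:ℝ) = 1 + 1 by norm_num, exp_add]
  nlinarith [exp_pos 1]

theorem thresholdGap_pos_at_lower : 0 < thresholdGap 0.124 := by
  have hlog : log ((1 - 0.124) / 0.124) < 2 - 0.043 :=
    log_lt_of_lt_exp_mul (by norm_num) (by nlinarith [exp_two_gt])
  unfold thresholdGap
  norm_num at hlog ⊢
  linarith

theorem thresholdGap_neg_at_upper : thresholdGap 0.1242 < 0 := by
  have hlog : 2 - 0.048 < log ((1 - 0.1242) / 0.1242) :=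
    lt_log_of_exp_lt_mul (by norm_num) (by nlinarith [exp_two_lt])
  unfold thresholdGap
  norm_num at hlog ⊢
  linarith

/-- There is a unique `p̂ ∈ (0,1/2)` with `(1-2p̂)³/(2p̂(1-p̂)) = ln((1-p̂)/p̂)`,
and `0.124 < p̂ < 0.1242`. -/
theorem threshold_qEve_unique :
    ∃ p : ℝ, (p ∈ Set.Ioo (0:ℝ) (1/2)
        ∧ (1 - 2*p)^3 / (2*p*(1-p)) = Real.log ((1-p)/p)
        ∧ 0.124 < p ∧ p < 0.1242)
      ∧ ∀ p' : ℝ, p' ∈ Set.Ioo (0:ℝ) (1/2) →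
          (1 - 2*p')^3 / (2*p'*(1-p')) = Real.log ((1-p')/p') → p' = p := by
  have hcrit := one_fifth_lt_thresholdCrit
  obtain ⟨p, ⟨hlo, hhi⟩, hp⟩ := intermediate_value_Ioo' (by norm_num : (0.124:ℝ) ≤ 0.1242)
    (continuousOn_thresholdGap.mono fun x hx => ⟨by linarith [hx.1], by linarith [hx.2]⟩)
    ⟨thresholdGap_neg_at_upper, thresholdGap_pos_at_lower⟩
  have hp0 : 0 < p := by linarith
  refine ⟨p, ⟨⟨hp0, by linarith⟩, sub_eq_zero.mp hp, hlo, hhi⟩, fun q hq hq_eq => ?_⟩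
  have hq0 : thresholdGap q = 0 := sub_eq_zero.mpr hq_eq
  rcases le_or_gt q thresholdCrit with hqc | hqc
  · exact strictAntiOn_thresholdGap.injOn ⟨hq.1, hqc⟩ ⟨hp0, by linarith⟩ (hq0.trans hp.symm)
  · exact absurd hq0 (thresholdGap_neg_of_thresholdCrit_le hqc.le hq.2).ne
end

section
/- Fenchel–Eggleston theorem: If S ⊆ ℝⁿ is a union of at most n connected subsets, then every point y in the convex hull of S lies in the convex hull of at most n points of S. -/
/-!
By Carathéodory, `y` is a convex combination `∑ wᵢ zᵢ` with positive weights of affinely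
independent points of `S`; only the case of `n + 1` points, an affine basis, needs work. Two
of them, `z_p` and `z_q`, lie in the same connected piece `C`. Compare the ratios
`fᵢ(x) = coordᵢ(x) / wᵢ` of barycentric coordinates: at `z_p` the index `p` is the unique
maximiser, at `z_q` it is not, so by connectedness some `x ∈ C` has `f_p(x) = f_j(x) = max fᵢ(x)`
for some `j ≠ p`. Pushing `y` away from `x` until it hits the boundary of the simplex writes `y`
as a convex combination of `x` and the `zᵢ` with `i ≠ p, j`: at most `n` points of `S`.
-/

open Finset

theorem IsPreconnected.exists_tie_at_max {X ι : Type*} [TopologicalSpace X] [Fintype ι]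
    {C : Set X} (hC : IsPreconnected C) {f : ι → X → ℝ} (hf : ∀ i, ContinuousOn (f i) C)
    {p q : ι} {a c : X} (ha : a ∈ C) (hc : c ∈ C) (hpa : ∀ j ≠ p, f j a < f p a)
    (hqc : f p c < f q c) :
    ∃ x ∈ C, ∃ j ≠ p, f j x = f p x ∧ ∀ i, f i x ≤ f p x := by
  classical
  have hqp : q ≠ p := by rintro rfl; exact hqc.false
  have hne : (univ.erase p).Nonempty := ⟨q, mem_erase.2 ⟨hqp, mem_univ q⟩⟩
  set g : X → ℝ := fun x => f p x - (univ.erase p).sup' hne (f · x)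
  have hga : 0 ≤ g a := by
    simpa [g] using fun j hj => (hpa j hj).le
  have hgc : g c ≤ 0 :=
    sub_nonpos.2 (hqc.le.trans (le_sup' (f · c) (mem_erase.2 ⟨hqp, mem_univ q⟩)))
  have hg : ContinuousOn g C :=
    (hf p).sub (ContinuousOn.finset_sup'_apply hne fun i _ => hf i)
  obtain ⟨x, hxC, hgx⟩ := hC.intermediate_value hc ha hg ⟨hgc, hga⟩
  obtain ⟨j, hj, hjx⟩ := exists_mem_eq_sup' hne (f · x)
  have hsup : (univ.erase p).sup' hne (f · x) = f p x := by linarith [show g x = _ from rfl]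
  refine ⟨x, hxC, j, (mem_erase.1 hj).1, hjx ▸ hsup, fun i => ?_⟩
  rcases eq_or_ne i p with rfl | hip
  · exact le_rfl
  · exact hsup ▸ le_sup' (f · x) (mem_erase.2 ⟨hip, mem_univ i⟩)

theorem sum_smul_mem_convexHull_insert {ι E : Type*} [Fintype ι] [AddCommGroup E] [Module ℝ E]
    (z : ι → E) {w β : ι → ℝ} (hw : ∑ i, w i = 1) (hβ : ∑ i, β i = 1) {M : ℝ}
    (hM : ∀ i, β i ≤ M * w i) :
    ∑ i, w i • z i ∈
      convexHull ℝ (insert (∑ i, β i • z i) (z '' {i | β i < M * w i})) := by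
  classical
  set x := ∑ i, β i • z i
  have hM1 : 1 ≤ M := by
    simpa [hw, hβ, ← mul_sum] using sum_le_sum fun i (_ : i ∈ univ) => hM i
  have hMpos : 0 < M := by linarith
  have hcoef : ∀ i, 0 ≤ w i - M⁻¹ * β i := fun i => by
    rw [sub_nonneg, inv_mul_le_iff₀ hMpos]; exact hM i
  -- `∑ wᵢ zᵢ = M⁻¹ x + ∑ (wᵢ - M⁻¹ βᵢ) zᵢ`; the terms with `βᵢ = M wᵢ` vanish, so their point
  -- may be replaced by `x`, which lies in the set.
  let c : Option ι → ℝ := fun o => o.elim M⁻¹ fun i => w i - M⁻¹ * β i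
  let v : Option ι → E := fun o => o.elim x fun i => if β i < M * w i then z i else x
  have hterm : ∀ i, (w i - M⁻¹ * β i) • (if β i < M * w i then z i else x) =
      (w i - M⁻¹ * β i) • z i := fun i => by
    split_ifs with h
    · rfl
    · have : β i = M * w i := le_antisymm (hM i) (not_lt.1 h)
      rw [this, ← mul_assoc, inv_mul_cancel₀ hMpos.ne', one_mul, sub_self, zero_smul, zero_smul]
  have hsum : ∑ o, c o = 1 := by
    simp [c, Fintype.sum_option, sum_sub_distrib, hw, ← mul_sum, hβ]
  have hcomb : ∑ o, c o • v o = ∑ i, w i • z i := by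
    simp only [c, v, Fintype.sum_option, Option.elim, hterm, sub_smul, sum_sub_distrib, mul_smul,
      ← smul_sum]
    abel
  rw [← hcomb]
  refine (convex_convexHull ℝ _).sum_mem (fun o _ => ?_) hsum (fun o _ => subset_convexHull ℝ _ ?_)
  · cases o
    · exact inv_nonneg.2 hMpos.le
    · exact hcoef _
  · rcases o with _ | i
    · exact Set.mem_insert _ _
    · dsimp only [v, Option.elim]
      split_ifs with h
      · exact Set.mem_insert_of_mem _ ⟨i, h, rfl⟩
      · exact Set.mem_insert _ _

theorem AffineBasis.exists_sum_smul_mem_convexHull_insert_image {ι E : Type*} [Fintype ι]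
    [NormedAddCommGroup E] [NormedSpace ℝ E] [FiniteDimensional ℝ E] (b : AffineBasis ι ℝ E)
    {w : ι → ℝ} (hw0 : ∀ i, 0 < w i) (hw1 : ∑ i, w i = 1) {C : Set E} (hC : IsPreconnected C)
    {p q : ι} (hpq : p ≠ q) (hp : b p ∈ C) (hq : b q ∈ C) :
    ∃ x ∈ C, ∃ s : Finset ι, #s + 2 ≤ Fintype.card ι ∧
      ∑ i, w i • b i ∈ convexHull ℝ (insert x (b '' s)) := by
  classical
  set f : ι → E → ℝ := fun i x => b.coord i x / w i
  have hf : ∀ i, ContinuousOn (f i) C := fun i =>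
    ((continuous_barycentric_coord b i).div_const (w i)).continuousOn
  have hpa : ∀ j ≠ p, f j (b p) < f p (b p) := fun j hj => by
    simp [f, b.coord_apply_ne hj, hw0 p]
  have hqc : f p (b q) < f q (b q) := by
    simp [f, b.coord_apply_ne hpq, hw0 q]
  obtain ⟨x, hxC, j, hjp, hjx, hmax⟩ := hC.exists_tie_at_max hf hp hq hpa hqc
  set M := f p x
  have hM : ∀ i, b.coord i x ≤ M * w i := fun i => (div_le_iff₀ (hw0 i)).1 (hmax i)
  have htie : ∀ i, f i x = M → b.coord i x = M * w i := fun i h =>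
    (div_eq_iff (hw0 i).ne').1 h
  set s := univ.filter fun i => b.coord i x < M * w i
  have hdisj : Disjoint s {p, j} := by
    simp only [s, disjoint_left, mem_filter, mem_insert, mem_singleton]
    rintro i ⟨-, hi⟩ (rfl | rfl) <;> simp [htie _ rfl, htie _ hjx] at hi
  refine ⟨x, hxC, s, ?_, ?_⟩
  · rw [← card_pair hjp.symm, ← card_union_of_disjoint hdisj]
    exact card_le_univ _
  · have := sum_smul_mem_convexHull_insert b hw1 (b.sum_coord_apply_eq_one x) hM
    simpa [s, b.linear_combination_coord_eq_self x] using this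

/-- Fenchel–Eggleston theorem: if `S ⊆ ℝⁿ` is a union of `n` connected sets, then
every point of `conv S` lies in the convex hull of at most `n` points of `S`. -/
theorem fenchel_eggleston (n : ℕ) (S : Set (EuclideanSpace ℝ (Fin n)))
    (Si : Fin n → Set (EuclideanSpace ℝ (Fin n)))
    (hunion : S = ⋃ i, Si i) (hconn : ∀ i, IsConnected (Si i))
    (y : EuclideanSpace ℝ (Fin n)) (hy : y ∈ convexHull ℝ S) :
    ∃ S' ⊆ S, S'.Finite ∧ S'.ncard ≤ n ∧ y ∈ convexHull ℝ S' := by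
  obtain ⟨ι, _, z, w, hzS, hz, hw0, hw1, rfl⟩ := eq_pos_convex_span_of_mem_convexHull hy
  have hcard : Fintype.card ι ≤ n + 1 := by
    simpa using hz.card_le_finrank_succ.trans
      (Nat.succ_le_succ (Submodule.finrank_le (vectorSpan ℝ (Set.range z))))
  rcases hcard.lt_or_eq with hlt | heq
  · refine ⟨Set.range z, hzS, Set.finite_range z, ?_, (convex_convexHull ℝ _).sum_mem
      (fun i _ => (hw0 i).le) hw1 fun i _ => subset_convexHull ℝ _ ⟨i, rfl⟩⟩
    rw [Set.ncard_range_of_injective hz.injective, Nat.card_eq_fintype_card]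
    omega
  let b : AffineBasis ι ℝ _ :=
    ⟨z, hz, hz.affineSpan_eq_top_iff_card_eq_finrank_add_one.2 (by simpa using heq)⟩
  have hcover : ∀ i, ∃ k, z i ∈ Si k := fun i => by
    simpa [hunion] using hzS ⟨i, rfl⟩
  choose k hk using hcover
  obtain ⟨p, q, hpq, hkpq⟩ := Fintype.exists_ne_map_eq_of_card_lt k (by simp [heq])
  obtain ⟨x, hxC, s, hs, hmem⟩ := b.exists_sum_smul_mem_convexHull_insert_image hw0 hw1
    (hconn (k p)).isPreconnected hpq (hk p) (hkpq ▸ hk q)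
  have hSi : Si (k p) ⊆ S := hunion ▸ Set.subset_iUnion Si (k p)
  refine ⟨insert x (b '' s), Set.insert_subset (hSi hxC) ?_, (s.finite_toSet.image b).insert x,
    ?_, hmem⟩
  · exact (Set.image_subset_range _ _).trans hzS
  · calc (insert x (b '' s)).ncard ≤ (b '' s).ncard + 1 := Set.ncard_insert_le _ _
      _ ≤ #s + 1 := by grw [Set.ncard_image_le s.finite_toSet, Set.ncard_coe_finset]
      _ ≤ n := by omega
end
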